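/- arXiv:2409.18551 — 2 statements merged into one kernel-verified Lean document; each statement's English description precedes it below -/
import Mathlib

section
/- Let 0<q<1 and a∈ℝ, and set t = q^a − q^{−a}. Define operators on the Hilbert space ℓ²(ℕ) with standard orthonormal basis (e_p)_{p≥0} by: Z e_p = q^{2p−a+1} e_p, X e_p = √((1−q^{2p})(q^{−2a+2p}+1)) e_{p−1} (with X e_0 = 0), and Y e_p = √((1−q^{2p+2})(q^{−2a+2p+2}+1)) e_{p+1}. Then these bounded operators satisfy the Podleś sphere relations: X Z = q² Z X, Y Z = q^{−2} Z Y, X Y = 1 − q t Z − q² Z², Y X = 1 − q^{−1} t Z − q^{−2} Z², and moreover X* = Y and Z* = Z. -/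
open scoped ENNReal

noncomputable section

/-- `ℓ²(ℕ)` with complex coefficients. -/
abbrev l2N : Type := lp (fun _ : ℕ => ℂ) 2

/-- standard orthonormal basis vector `e p` of `ℓ²(ℕ)`. -/
def e (p : ℕ) : l2N := lp.single 2 p 1

/-!
The operators are diagonal (`Z`) or weighted shifts (`X`, `Y`) in the basis `e p`, so every
relation reduces to an identity between their entries. Writing `u = q ^ (p + 1)` and `s = q ^ (-a)`,
the eigenvalue of `Z` is `q⁻¹ s u²` and the squared weight is `(1 - u²) (s² u² + 1)`, and the
relations `X Y = 1 - q t Z - q² Z²` and `Y X = 1 - q⁻¹ t Z - q⁻² Z²` become polynomial identities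
in `q, s, u`.
-/

open scoped ComplexInnerProductSpace

namespace l2N

theorem ext_e {F : Type*} [AddCommGroup F] [Module ℂ F] [TopologicalSpace F] [T2Space F]
    {A B : l2N →L[ℂ] F} (h : ∀ p, A (e p) = B (e p)) : A = B :=
  lp.ext_continuousLinearMap ENNReal.ofNat_ne_top fun p => ContinuousLinearMap.ext_ring (h p)

theorem ext_inner_e {u v : l2N} (h : ∀ p, ⟪u, e p⟫ = ⟪v, e p⟫) : u = v :=
  ext_inner_right ℂ fun y => congr($(ext_e (A := innerSL ℂ u) (B := innerSL ℂ v) h) y)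

theorem inner_e_e (m n : ℕ) : ⟪e m, e n⟫ = if m = n then 1 else 0 := by
  simp [e, lp.inner_single_left, lp.single_apply, Pi.single_apply]

theorem adjoint_eq_of_inner_e {A B : l2N →L[ℂ] l2N}
    (h : ∀ m n, ⟪B (e m), e n⟫ = ⟪e m, A (e n)⟫) : A.adjoint = B :=
  ext_e fun m => ext_inner_e fun n => by
    rw [ContinuousLinearMap.adjoint_inner_left, h]

end l2N

open l2N

def IsDiagonal (Z : l2N →L[ℂ] l2N) (z : ℕ → ℂ) : Prop :=
  ∀ p, Z (e p) = z p • e p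

def IsLoweringShift (X : l2N →L[ℂ] l2N) (w : ℕ → ℂ) : Prop :=
  X (e 0) = 0 ∧ ∀ p, X (e (p + 1)) = w p • e p

def IsRaisingShift (Y : l2N →L[ℂ] l2N) (w : ℕ → ℂ) : Prop :=
  ∀ p, Y (e p) = w p • e (p + 1)

section WeightedShifts

variable {X Y Z : l2N →L[ℂ] l2N} {u v z : ℕ → ℂ}

theorem IsDiagonal.eq_of_forall {Z' : l2N →L[ℂ] l2N} {z' : ℕ → ℂ} (hZ : IsDiagonal Z z)
    (hZ' : IsDiagonal Z' z') (h : ∀ p, z p = z' p) : Z = Z' :=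
  ext_e fun p => by rw [hZ p, hZ' p, h p]

theorem IsDiagonal.one_sub_smul_sub_smul_comp (hZ : IsDiagonal Z z) (α β : ℂ) :
    IsDiagonal (1 - α • Z - β • (Z ∘L Z)) (fun p => 1 - α * z p - β * z p ^ 2) := fun p => by
  simp only [sub_apply, smul_apply,
    one_apply_eq_self, ContinuousLinearMap.comp_apply, hZ p, map_smul, smul_smul]
  module

theorem IsDiagonal.adjoint_eq_self {z : ℕ → ℝ} (hZ : IsDiagonal Z fun p => (z p : ℂ)) :
    Z.adjoint = Z :=
  adjoint_eq_of_inner_e fun m n => by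
    simp only [hZ m, hZ n, inner_smul_left, inner_smul_right, inner_e_e]
    split_ifs <;> simp_all

theorem IsLoweringShift.comp_eq_smul_comp (hX : IsLoweringShift X u) (hZ : IsDiagonal Z z)
    {c : ℂ} (hz : ∀ p, z (p + 1) = c * z p) : X ∘L Z = c • (Z ∘L X) :=
  ext_e fun p => by
    cases p with
    | zero => simp [hZ 0, hX.1]
    | succ p =>
      simp only [ContinuousLinearMap.comp_apply, smul_apply, hZ _, map_smul,
        hX.2, smul_smul, hz]
      ring_nf

theorem IsRaisingShift.comp_eq_inv_smul_comp (hY : IsRaisingShift Y v) (hZ : IsDiagonal Z z)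
    {c : ℂ} (hc : c ≠ 0) (hz : ∀ p, z (p + 1) = c * z p) : Y ∘L Z = c⁻¹ • (Z ∘L Y) :=
  ext_e fun p => by
    simp only [ContinuousLinearMap.comp_apply, smul_apply, hZ _, map_smul,
      hY _, smul_smul, hz]
    congr 1
    field_simp

theorem IsLoweringShift.comp_isRaisingShift (hX : IsLoweringShift X u) (hY : IsRaisingShift Y v) :
    IsDiagonal (X ∘L Y) fun p => u p * v p := fun p => by
  simp only [ContinuousLinearMap.comp_apply, hY p, map_smul, hX.2, smul_smul, mul_comm]

theorem IsRaisingShift.comp_isLoweringShift (hY : IsRaisingShift Y v) (hX : IsLoweringShift X u)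
    {d : ℕ → ℂ} (hd₀ : d 0 = 0) (hd : ∀ p, d (p + 1) = v p * u p) : IsDiagonal (Y ∘L X) d
  | 0 => by simp [hX.1, hd₀]
  | p + 1 => by simp only [ContinuousLinearMap.comp_apply, hX.2, map_smul, hY p, smul_smul, hd, mul_comm]

theorem IsLoweringShift.adjoint_eq {w : ℕ → ℝ} (hX : IsLoweringShift X fun p => (w p : ℂ))
    (hY : IsRaisingShift Y fun p => (w p : ℂ)) : X.adjoint = Y :=
  adjoint_eq_of_inner_e fun m n => by
    cases n with
    | zero => simp [hX.1, hY m, inner_e_e]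
    | succ n =>
      simp only [hX.2, hY m, inner_smul_left, inner_smul_right, inner_e_e]
      split_ifs <;> simp_all

end WeightedShifts

theorem podles_eigenvalue_add_one {q : ℝ} (hq : 0 < q) (a x : ℝ) :
    q ^ (2 * (x + 1) - a + 1) = q ^ 2 * q ^ (2 * x - a + 1) := by
  rw [show 2 * (x + 1) - a + 1 = 2 + (2 * x - a + 1) by ring, Real.rpow_add hq, Real.rpow_two]

theorem podles_weight_sq_eq {q : ℝ} (hq : 0 < q) (a x : ℝ) :
    (1 - q ^ (2 * x + 2)) * (q ^ (-(2 * a) + 2 * x + 2) + 1) =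
      1 - q * (q ^ a - q ^ (-a)) * q ^ (2 * x - a + 1) - q ^ 2 * (q ^ (2 * x - a + 1)) ^ 2 := by
  have hsq (r : ℝ) : q ^ (2 * r) = (q ^ r) ^ 2 := by
    rw [mul_comm, Real.rpow_mul hq.le, Real.rpow_two]
  have h₁ : q ^ (2 * x + 2) = (q ^ (x + 1)) ^ 2 := by
    rw [← hsq]; ring_nf
  have h₂ : q ^ (-(2 * a) + 2 * x + 2) = (q ^ (-a)) ^ 2 * (q ^ (x + 1)) ^ 2 := by
    rw [← hsq, ← hsq, ← Real.rpow_add hq]; ring_nf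
  have h₃ : q ^ (2 * x - a + 1) = q ^ (-a) * (q ^ (x + 1)) ^ 2 * q⁻¹ := by
    rw [← hsq, ← Real.rpow_neg_one, ← Real.rpow_add hq, ← Real.rpow_add hq]; ring_nf
  have h₄ : q ^ a = (q ^ (-a))⁻¹ := by rw [Real.rpow_neg hq.le, inv_inv]
  have : q ^ (-a) ≠ 0 := (Real.rpow_pos_of_pos hq _).ne'
  rw [h₁, h₂, h₃, h₄]
  field_simp
  ring

theorem podles_weight_sq_eq_of_add_one {q : ℝ} (hq : 0 < q) (a x : ℝ) :
    (1 - q ^ (2 * x + 2)) * (q ^ (-(2 * a) + 2 * x + 2) + 1) =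
      1 - q⁻¹ * (q ^ a - q ^ (-a)) * q ^ (2 * (x + 1) - a + 1)
        - (q ^ 2)⁻¹ * (q ^ (2 * (x + 1) - a + 1)) ^ 2 := by
  rw [podles_weight_sq_eq hq, podles_eigenvalue_add_one hq]
  field_simp

/-- The operators of the representation `π₊` of the Podleś sphere `O_q(S_t²)` satisfy
the defining relations of the Podleś sphere, together with `X* = Y`, `Z* = Z`. -/
theorem podles_representation_relations (q a : ℝ) (hq0 : 0 < q) (hq1 : q < 1)
    (t : ℝ) (ht : t = q ^ a - q ^ (-a))
    (X Y Z : l2N →L[ℂ] l2N)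
    (hZ : ∀ p : ℕ, Z (e p) = ((q ^ (2 * (p : ℝ) - a + 1) : ℝ) : ℂ) • e p)
    (hX0 : X (e 0) = 0)
    (hX : ∀ p : ℕ, X (e (p + 1)) =
      ((Real.sqrt ((1 - q ^ (2 * ((p : ℝ) + 1))) * (q ^ (-(2 * a) + 2 * ((p : ℝ) + 1)) + 1)) : ℝ) : ℂ)
        • e p)
    (hY : ∀ p : ℕ, Y (e p) =
      ((Real.sqrt ((1 - q ^ (2 * (p : ℝ) + 2)) * (q ^ (-(2 * a) + 2 * (p : ℝ) + 2) + 1)) : ℝ) : ℂ)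
        • e (p + 1)) :
    X ∘L Z = ((q : ℂ) ^ 2) • (Z ∘L X) ∧
    Y ∘L Z = ((q : ℂ) ^ 2)⁻¹ • (Z ∘L Y) ∧
    X ∘L Y = 1 - ((q * t : ℝ) : ℂ) • Z - ((q : ℂ) ^ 2) • (Z ∘L Z) ∧
    Y ∘L X = 1 - (((q⁻¹ * t : ℝ)) : ℂ) • Z - ((q : ℂ) ^ 2)⁻¹ • (Z ∘L Z) ∧
    ContinuousLinearMap.adjoint X = Y ∧
    ContinuousLinearMap.adjoint Z = Z := by
  set W : ℕ → ℝ := fun p => (1 - q ^ (2 * (p : ℝ) + 2)) * (q ^ (-(2 * a) + 2 * (p : ℝ) + 2) + 1)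
  have hW (p : ℕ) : √(W p) * √(W p) = W p := by
    refine Real.mul_self_sqrt (mul_nonneg ?_ (by positivity))
    linarith [Real.rpow_le_one hq0.le hq1.le (by positivity : (0 : ℝ) ≤ 2 * p + 2)]
  have hZd : IsDiagonal Z fun p => ((q ^ (2 * (p : ℝ) - a + 1) : ℝ) : ℂ) := hZ
  have hYs : IsRaisingShift Y fun p => (√(W p) : ℂ) := hY
  have hXs : IsLoweringShift X fun p => (√(W p) : ℂ) :=
    ⟨hX0, fun p => by simp only [hX p, W, mul_add, mul_one, add_assoc]⟩
  have hz (p : ℕ) : ((q ^ (2 * ((p + 1 : ℕ) : ℝ) - a + 1) : ℝ) : ℂ) =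
      (q : ℂ) ^ 2 * ((q ^ (2 * (p : ℝ) - a + 1) : ℝ) : ℂ) := by
    exact_mod_cast podles_eigenvalue_add_one hq0 a p
  subst ht
  refine ⟨hXs.comp_eq_smul_comp hZd hz, hYs.comp_eq_inv_smul_comp hZd (by simp [hq0.ne']) hz,
    (hXs.comp_isRaisingShift hYs).eq_of_forall (hZd.one_sub_smul_sub_smul_comp _ _) fun p => ?_,
    (hYs.comp_isLoweringShift hXs ?_ fun p => ?_).eq_of_forall
      (hZd.one_sub_smul_sub_smul_comp _ _) fun _ => rfl,
    hXs.adjoint_eq hYs, hZd.adjoint_eq_self⟩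
  · exact_mod_cast (hW p).trans (podles_weight_sq_eq hq0 a p)
  · -- `Y X` kills `e 0` because the weight formula vanishes at `p = -1`
    have := podles_weight_sq_eq_of_add_one hq0 a (-1)
    norm_num at this ⊢
    exact_mod_cast this.symm
  · have := (hW p).trans (podles_weight_sq_eq_of_add_one hq0 a p)
    push_cast at this ⊢
    exact_mod_cast this.symm
end
end

section
/- Let H be a Hopf *-algebra over ℂ with invertible antipode S. Let V be a pre-Hilbert space carrying a unitary right H-comodule structure δ_V(v) = v₍₀₎⊗v₍₁₎ satisfying ⟨v, w₍₀₎⟩ w₍₁₎ = ⟨v₍₀₎, w⟩ S(v₍₁₎)* for all v,w∈V, and let W be a pre-Hilbert space carrying a left H-module structure by adjointable operators with ⟨v, h w⟩ = ⟨h* v, w⟩. Then the linear map 𝒳: V ⊗ W → V ⊗ W, v ⊗ w ↦ v₍₀₎ ⊗ v₍₁₎ w, is a unitary (inner-product preserving bijection) with inverse v ⊗ w ↦ v₍₀₎ ⊗ S(v₍₁₎) w. -/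
open TensorProduct

set_option maxHeartbeats 1600000

noncomputable section

/-- Lemma 2.7 (`LemIsoDKReps`) in the special case `B = A = H`: for a Hopf `*`-algebra `H`
with bijective antipode `S`, a unitary right `H`-comodule `V` and a unitary left
`H`-module `W`, the map `𝒳 : V ⊗ W → V ⊗ W, v ⊗ w ↦ v₍₀₎ ⊗ v₍₁₎w` is a unitary with
inverse `v ⊗ w ↦ v₍₀₎ ⊗ S(v₍₁₎)w`. -/
theorem unitary_exchange_map
    (H : Type*) [Ring H] [HopfAlgebra ℂ H] [StarRing H]
    (hS : Function.Bijective (HopfAlgebra.antipode (R := ℂ) (A := H)))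
    (V W : Type*)
    [NormedAddCommGroup V] [InnerProductSpace ℂ V]
    [NormedAddCommGroup W] [InnerProductSpace ℂ W]
    -- the right coaction on V, coassociative and counital
    (δ : V →ₗ[ℂ] V ⊗[ℂ] H)
    (hcoassoc : ∀ v : V, (TensorProduct.map δ LinearMap.id) (δ v) =
      (TensorProduct.assoc ℂ V H H).symm
        ((TensorProduct.map LinearMap.id Coalgebra.comul) (δ v)))
    (hcounit : ∀ v : V,
      (TensorProduct.rid ℂ V) ((TensorProduct.map LinearMap.id Coalgebra.counit) (δ v)) = v)
    -- unitarity of the coaction: ⟨v, w₍₀₎⟩ w₍₁₎ = ⟨v₍₀₎, w⟩ S(v₍₁₎)*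
    (hVunit : ∀ v w : V,
      (TensorProduct.lid ℂ H)
        ((TensorProduct.map ((innerSL ℂ v).toLinearMap) LinearMap.id) (δ w)) =
      star ((TensorProduct.lid ℂ H)
        ((TensorProduct.map ((innerSL ℂ w).toLinearMap)
          (HopfAlgebra.antipode (R := ℂ))) (δ v))))
    -- the left action of H on W by adjointable operators
    (act : H →ₐ[ℂ] Module.End ℂ W)
    (hWunit : ∀ (h : H) (x y : W), inner ℂ x (act h y) = (inner ℂ (act (star h) x) y : ℂ))
    -- the tensor-product inner ℂ product on V ⊗ W
    (Φ : (V ⊗[ℂ] W) → (V ⊗[ℂ] W) → ℂ)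
    (hΦ_simple : ∀ (v v' : V) (w w' : W),
      Φ (v ⊗ₜ w) (v' ⊗ₜ w') = (inner ℂ v v' : ℂ) * (inner ℂ w w' : ℂ))
    (hΦ_addl : ∀ x y z, Φ (x + y) z = Φ x z + Φ y z)
    (hΦ_addr : ∀ x y z, Φ x (y + z) = Φ x y + Φ x z) :
    let μ : H ⊗[ℂ] W →ₗ[ℂ] W := TensorProduct.lift act.toLinearMap
    let 𝒳 : V ⊗[ℂ] W →ₗ[ℂ] V ⊗[ℂ] W :=
      (TensorProduct.map LinearMap.id μ) ∘ₗ (TensorProduct.assoc ℂ V H W).toLinearMap ∘ₗ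
        (TensorProduct.map δ LinearMap.id)
    let 𝒳inv : V ⊗[ℂ] W →ₗ[ℂ] V ⊗[ℂ] W :=
      (TensorProduct.map LinearMap.id μ) ∘ₗ (TensorProduct.assoc ℂ V H W).toLinearMap ∘ₗ
        (TensorProduct.map
          ((TensorProduct.map LinearMap.id (HopfAlgebra.antipode (R := ℂ))) ∘ₗ δ)
          LinearMap.id)
    𝒳inv ∘ₗ 𝒳 = LinearMap.id ∧ 𝒳 ∘ₗ 𝒳inv = LinearMap.id ∧
      ∀ x y : V ⊗[ℂ] W, Φ (𝒳 x) (𝒳 y) = Φ x y := by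

  intro μ 𝒳 𝒳inv
  -- abbreviations
  set S : H →ₗ[ℂ] H := HopfAlgebra.antipode (R := ℂ) (A := H) with hSdef
  set m : H ⊗[ℂ] H →ₗ[ℂ] H := LinearMap.mul' ℂ H with hmdef
  have hm : ∀ g h : H, m (g ⊗ₜ h) = g * h := by intro g h; rw [hmdef, LinearMap.mul'_apply]
  -- basic facts about μ
  have hμ : ∀ (h : H) (w : W), μ (h ⊗ₜ w) = act h w := by
    intro h w; simp [μ, TensorProduct.lift.tmul]
  have hactalg : ∀ (z : ℂ) (w : W), act (algebraMap ℂ H z) w = z • w := by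
    intro z w
    rw [AlgHom.commutes, Module.algebraMap_end_apply]
  -- Q and J
  set Q : (V ⊗[ℂ] H) ⊗[ℂ] W →ₗ[ℂ] V ⊗[ℂ] W :=
    (TensorProduct.map LinearMap.id μ) ∘ₗ (TensorProduct.assoc ℂ V H W).toLinearMap with hQdef
  set J : (V ⊗[ℂ] H) ⊗[ℂ] H →ₗ[ℂ] V ⊗[ℂ] H :=
    (TensorProduct.map LinearMap.id m) ∘ₗ (TensorProduct.assoc ℂ V H H).toLinearMap with hJdef
  have hQtm : ∀ (x : V) (h : H) (w : W), Q ((x ⊗ₜ h) ⊗ₜ w) = x ⊗ₜ act h w := by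
    intro x h w; simp [hQdef, hμ]
  have hJtm : ∀ (x : V) (g h : H), J ((x ⊗ₜ g) ⊗ₜ h) = x ⊗ₜ (g * h) := by
    intro x g h; simp [hJdef, hm]
  have hX : ∀ (v : V) (w : W), 𝒳 (v ⊗ₜ w) = Q (δ v ⊗ₜ w) := by
    intro v w; simp [𝒳, hQdef]
  have hXinv : ∀ (v : V) (w : W),
      𝒳inv (v ⊗ₜ w) = Q ((TensorProduct.map LinearMap.id S) (δ v) ⊗ₜ w) := by
    intro v w; simp [𝒳inv, hQdef]; rfl
  -- lemA : multiplicativity through μ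
  have lemA : ∀ (u : V ⊗[ℂ] H) (h : H) (w : W),
      Q (u ⊗ₜ μ (h ⊗ₜ w)) = Q (J (u ⊗ₜ h) ⊗ₜ w) := by
    intro u h w
    induction u using TensorProduct.induction_on with
    | zero => simp only [TensorProduct.zero_tmul, map_zero]
    | tmul x g =>
        rw [hJtm, hQtm, hQtm, hμ, map_mul, Module.End.mul_apply]
    | add a b ha hb =>
          simp only [map_add, TensorProduct.tmul_add, TensorProduct.add_tmul,
            LinearMap.add_apply, star_add, inner_add_right, smul_add, hΦ_addl, hΦ_addr, ha, hb]
  -- the two inner ℂ Hopf computations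
  have lemC1 : ∀ (x : V) (c : H ⊗[ℂ] H),
      J ((TensorProduct.map (TensorProduct.map LinearMap.id S) LinearMap.id)
        ((TensorProduct.assoc ℂ V H H).symm (x ⊗ₜ c))) =
      x ⊗ₜ (m (LinearMap.rTensor H S c)) := by
    intro x c
    induction c using TensorProduct.induction_on with
    | zero => simp only [TensorProduct.tmul_zero, map_zero, smul_zero]
    | tmul a b => simp [hJtm, hm]
    | add a b ha hb =>
          simp only [map_add, TensorProduct.tmul_add, TensorProduct.add_tmul,
            LinearMap.add_apply, star_add, inner_add_right, smul_add, hΦ_addl, hΦ_addr, ha, hb]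
  have lemC1' : ∀ (x : V) (c : H ⊗[ℂ] H),
      J ((TensorProduct.map LinearMap.id S)
        ((TensorProduct.assoc ℂ V H H).symm (x ⊗ₜ c))) =
      x ⊗ₜ (m (LinearMap.lTensor H S c)) := by
    intro x c
    induction c using TensorProduct.induction_on with
    | zero => simp only [TensorProduct.tmul_zero, map_zero, smul_zero]
    | tmul a b => simp [hJtm, hm]
    | add a b ha hb =>
          simp only [map_add, TensorProduct.tmul_add, TensorProduct.add_tmul,
            LinearMap.add_apply, star_add, inner_add_right, smul_add, hΦ_addl, hΦ_addr, ha, hb]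
  have lemC2 : ∀ t : V ⊗[ℂ] H,
      J ((TensorProduct.map (TensorProduct.map LinearMap.id S) LinearMap.id)
        ((TensorProduct.assoc ℂ V H H).symm
          ((TensorProduct.map LinearMap.id Coalgebra.comul) t))) =
      (TensorProduct.map LinearMap.id ((Algebra.linearMap ℂ H) ∘ₗ Coalgebra.counit)) t := by
    intro t
    induction t using TensorProduct.induction_on with
    | zero => simp
    | tmul x h =>
        rw [TensorProduct.map_tmul, LinearMap.id_apply, lemC1, hmdef, hSdef,
          HopfAlgebra.mul_antipode_rTensor_comul_apply, TensorProduct.map_tmul]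
        rfl
    | add a b ha hb => simp only [map_add, TensorProduct.tmul_add, TensorProduct.add_tmul,
            LinearMap.add_apply, star_add, inner_add_right, smul_add, hΦ_addl, hΦ_addr, ha, hb]
  have lemC2' : ∀ t : V ⊗[ℂ] H,
      J ((TensorProduct.map LinearMap.id S)
        ((TensorProduct.assoc ℂ V H H).symm
          ((TensorProduct.map LinearMap.id Coalgebra.comul) t))) =
      (TensorProduct.map LinearMap.id ((Algebra.linearMap ℂ H) ∘ₗ Coalgebra.counit)) t := by
    intro t
    induction t using TensorProduct.induction_on with
    | zero => simp
    | tmul x h =>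
        rw [TensorProduct.map_tmul, LinearMap.id_apply, lemC1', hmdef, hSdef,
          HopfAlgebra.mul_antipode_lTensor_comul_apply, TensorProduct.map_tmul]
        rfl
    | add a b ha hb => simp only [map_add, TensorProduct.tmul_add, TensorProduct.add_tmul,
            LinearMap.add_apply, star_add, inner_add_right, smul_add, hΦ_addl, hΦ_addr, ha, hb]
  have lemD : ∀ (t : V ⊗[ℂ] H) (w : W),
      Q ((TensorProduct.map LinearMap.id ((Algebra.linearMap ℂ H) ∘ₗ Coalgebra.counit)) t ⊗ₜ w) =
      ((TensorProduct.rid ℂ V) ((TensorProduct.map LinearMap.id Coalgebra.counit) t)) ⊗ₜ w := by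
    intro t w
    induction t using TensorProduct.induction_on with
    | zero => simp only [TensorProduct.zero_tmul, map_zero]
    | tmul x h =>
        simp only [TensorProduct.map_tmul, LinearMap.id_apply, LinearMap.comp_apply,
          Algebra.linearMap_apply, hQtm, hactalg, TensorProduct.rid_tmul,
          TensorProduct.tmul_smul, TensorProduct.smul_tmul']
    | add a b ha hb =>
          simp only [map_add, TensorProduct.tmul_add, TensorProduct.add_tmul,
            LinearMap.add_apply, star_add, inner_add_right, smul_add, hΦ_addl, hΦ_addr, ha, hb]
  -- Part 1 : 𝒳inv ∘ 𝒳 = id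
  have part1 : 𝒳inv ∘ₗ 𝒳 = LinearMap.id := by
    apply TensorProduct.ext'
    intro v w
    have expand : ∀ u : V ⊗[ℂ] H,
        (TensorProduct.map ((TensorProduct.map LinearMap.id S) ∘ₗ δ) LinearMap.id) u =
        (TensorProduct.map (TensorProduct.map LinearMap.id S) LinearMap.id)
          ((TensorProduct.map δ LinearMap.id) u) := by
      intro u
      induction u using TensorProduct.induction_on with
      | zero => simp only [map_zero]
      | tmul x h => simp
      | add a b ha hb => simp only [map_add, ha, hb]
    have step : ∀ (t : V ⊗[ℂ] H) (w : W),
        𝒳inv (Q (t ⊗ₜ w)) =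
        Q (J ((TensorProduct.map ((TensorProduct.map LinearMap.id S) ∘ₗ δ) LinearMap.id) t)
          ⊗ₜ w) := by
      intro t w
      induction t using TensorProduct.induction_on with
      | zero => simp only [TensorProduct.zero_tmul, map_zero]
      | tmul x h =>
          rw [hQtm, ← hμ, hXinv, lemA]
          simp only [TensorProduct.map_tmul, LinearMap.id_apply, LinearMap.comp_apply]
      | add a b ha hb =>
          simp only [map_add, TensorProduct.tmul_add, TensorProduct.add_tmul,
            LinearMap.add_apply, star_add, inner_add_right, smul_add, hΦ_addl, hΦ_addr, ha, hb]
    rw [LinearMap.comp_apply, LinearMap.id_apply, hX, step, expand, hcoassoc, lemC2,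
      lemD, hcounit]
  -- Part 2 : 𝒳 ∘ 𝒳inv = id
  have part2 : 𝒳 ∘ₗ 𝒳inv = LinearMap.id := by
    apply TensorProduct.ext'
    intro v w
    have step : ∀ (t : V ⊗[ℂ] H) (w : W),
        𝒳 (Q (t ⊗ₜ w)) =
        Q (J ((TensorProduct.map δ LinearMap.id) t) ⊗ₜ w) := by
      intro t w
      induction t using TensorProduct.induction_on with
      | zero => simp only [TensorProduct.zero_tmul, map_zero]
      | tmul x h =>
          rw [hQtm, ← hμ, hX, lemA]
          simp only [TensorProduct.map_tmul, LinearMap.id_apply]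
      | add a b ha hb =>
          simp only [map_add, TensorProduct.tmul_add, TensorProduct.add_tmul,
            LinearMap.add_apply, star_add, inner_add_right, smul_add, hΦ_addl, hΦ_addr, ha, hb]
    have swap : ∀ u : V ⊗[ℂ] H,
        (TensorProduct.map δ LinearMap.id) ((TensorProduct.map LinearMap.id S) u) =
        (TensorProduct.map LinearMap.id S) ((TensorProduct.map δ LinearMap.id) u) := by
      intro u
      induction u using TensorProduct.induction_on with
      | zero => simp
      | tmul x h => simp
      | add a b ha hb => simp only [map_add, ha, hb]
    rw [LinearMap.comp_apply, LinearMap.id_apply, hXinv, step, swap, hcoassoc, lemC2',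
      lemD, hcounit]
  refine ⟨part1, part2, ?_⟩
  -- Part 3 : Φ (𝒳 x) (𝒳 y) = Φ x y
  have Φ0l : ∀ z, Φ 0 z = 0 := by
    intro z
    have h := hΦ_addl 0 0 z
    rw [add_zero] at h
    exact left_eq_add.mp h
  have Φ0r : ∀ z, Φ z 0 = 0 := by
    intro z
    have h := hΦ_addr z 0 0
    rw [add_zero] at h
    exact left_eq_add.mp h
  -- the key pure-tensor computation
  have key3 : ∀ (v : V) (w : W) (v' : V) (w' : W),
      Φ (𝒳 (v ⊗ₜ w)) (𝒳 (v' ⊗ₜ w')) = (inner ℂ v v' : ℂ) * (inner ℂ w w' : ℂ) := by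
    intro v w v' w'
    -- lemB' : inner ℂ products against Q (t' ⊗ w')
    have lemB' : ∀ (x : V) (w₀ : W) (t' : V ⊗[ℂ] H),
        Φ (x ⊗ₜ w₀) (Q (t' ⊗ₜ w')) =
        (inner ℂ w₀ (act ((TensorProduct.lid ℂ H)
          ((TensorProduct.map ((innerSL ℂ x).toLinearMap) LinearMap.id) t')) w') : ℂ) := by
      intro x w₀ t'
      induction t' using TensorProduct.induction_on with
      | zero => simp only [TensorProduct.zero_tmul, map_zero, LinearMap.zero_apply,
            inner_zero_right, Φ0r]
      | tmul y k =>
          rw [hQtm, hΦ_simple, TensorProduct.map_tmul, LinearMap.id_apply]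
          simp only [ContinuousLinearMap.coe_coe, innerSL_apply_apply, TensorProduct.lid_tmul,
            map_smul, LinearMap.smul_apply, inner_smul_right]
      | add a b ha hb =>
          simp only [map_add, TensorProduct.tmul_add, TensorProduct.add_tmul,
            LinearMap.add_apply, star_add, inner_add_right, smul_add, hΦ_addl, hΦ_addr, ha, hb]
    -- define L : V →ₗ H
    set L : V →ₗ[ℂ] H := (TensorProduct.lid ℂ H).toLinearMap ∘ₗ
      (TensorProduct.map ((innerSL ℂ v').toLinearMap) S) ∘ₗ δ with hLdef
    have hLx : ∀ x : V, (TensorProduct.lid ℂ H)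
        ((TensorProduct.map ((innerSL ℂ x).toLinearMap) LinearMap.id) (δ v')) = star (L x) := by
      intro x
      rw [hLdef, LinearMap.comp_apply, LinearMap.comp_apply, LinearEquiv.coe_coe]
      exact hVunit x v'
    -- lemA' : the full pairing
    have lemA' : ∀ (t : V ⊗[ℂ] H) (w : W),
        Φ (Q (t ⊗ₜ w)) (𝒳 (v' ⊗ₜ w')) =
        (inner ℂ w (act (star (m ((TensorProduct.map L LinearMap.id) t))) w') : ℂ) := by
      intro t w
      induction t using TensorProduct.induction_on with
      | zero => simp only [TensorProduct.zero_tmul, map_zero, star_zero,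
            LinearMap.zero_apply, inner_zero_right, Φ0l]
      | tmul x h =>
          rw [hQtm, hX, lemB', hLx]
          rw [TensorProduct.map_tmul, LinearMap.id_apply, hm, star_mul,
            map_mul, Module.End.mul_apply, hWunit (star h), star_star]
      | add a b ha hb =>
          simp only [map_add, TensorProduct.tmul_add, TensorProduct.add_tmul,
            LinearMap.add_apply, star_add, inner_add_right, smul_add, hΦ_addl, hΦ_addr, ha, hb]
    -- compute m ((map L id) (δ v)) = algebraMap ⟪v', v⟫
    have lemP1 : ∀ (x : V) (c : H ⊗[ℂ] H),
        m ((TensorProduct.map ((TensorProduct.lid ℂ H).toLinearMap ∘ₗ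
            (TensorProduct.map ((innerSL ℂ v').toLinearMap) S)) LinearMap.id)
          ((TensorProduct.assoc ℂ V H H).symm (x ⊗ₜ c))) =
        (inner ℂ v' x : ℂ) • m (LinearMap.rTensor H S c) := by
      intro x c
      induction c using TensorProduct.induction_on with
      | zero => simp only [TensorProduct.tmul_zero, map_zero, smul_zero]
      | tmul a b =>
          simp [hm, TensorProduct.smul_tmul', smul_mul_assoc]
      | add a b ha hb =>
          simp only [map_add, TensorProduct.tmul_add, TensorProduct.add_tmul,
            LinearMap.add_apply, star_add, inner_add_right, smul_add, hΦ_addl, hΦ_addr, ha, hb]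
    have lemP2 : m ((TensorProduct.map L LinearMap.id) (δ v)) =
        algebraMap ℂ H (inner ℂ v' v : ℂ) := by
      have expandL : (TensorProduct.map L (LinearMap.id : H →ₗ[ℂ] H)) =
          (TensorProduct.map ((TensorProduct.lid ℂ H).toLinearMap ∘ₗ
            (TensorProduct.map ((innerSL ℂ v').toLinearMap) S)) LinearMap.id) ∘ₗ
          (TensorProduct.map δ LinearMap.id) := by
        apply TensorProduct.ext'; intro x h; simp [hLdef]
      rw [expandL, LinearMap.comp_apply, hcoassoc]
      have gen : ∀ t : V ⊗[ℂ] H,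
          m ((TensorProduct.map ((TensorProduct.lid ℂ H).toLinearMap ∘ₗ
              (TensorProduct.map ((innerSL ℂ v').toLinearMap) S)) LinearMap.id)
            ((TensorProduct.assoc ℂ V H H).symm
              ((TensorProduct.map LinearMap.id Coalgebra.comul) t))) =
          algebraMap ℂ H ((inner ℂ v' ((TensorProduct.rid ℂ V)
            ((TensorProduct.map LinearMap.id Coalgebra.counit) t)) : ℂ)) := by
        intro t
        induction t using TensorProduct.induction_on with
        | zero => simp
        | tmul x h =>
            rw [TensorProduct.map_tmul, LinearMap.id_apply, lemP1, hmdef, hSdef,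
              HopfAlgebra.mul_antipode_rTensor_comul_apply, TensorProduct.map_tmul,
              LinearMap.id_apply, TensorProduct.rid_tmul, inner_smul_right,
              Algebra.smul_def, ← map_mul, mul_comm]
        | add a b ha hb =>
          simp only [map_add, TensorProduct.tmul_add, TensorProduct.add_tmul,
            LinearMap.add_apply, star_add, inner_add_right, smul_add, hΦ_addl, hΦ_addr, ha, hb]
      rw [gen, hcounit]
    -- put it all together
    rw [hX v w, lemA', lemP2, hWunit, star_star, hactalg, inner_smul_left,
      inner_conj_symm]
  intro x y
  induction x using TensorProduct.induction_on with
  | zero => simp only [map_zero, Φ0l]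
  | tmul v w =>
      induction y using TensorProduct.induction_on with
      | zero => simp only [map_zero, Φ0r]
      | tmul v' w' => rw [key3, hΦ_simple]
      | add a b ha hb => simp only [map_add, TensorProduct.tmul_add, TensorProduct.add_tmul,
            LinearMap.add_apply, star_add, inner_add_right, smul_add, hΦ_addl, hΦ_addr, ha, hb]
  | add a b ha hb => simp only [map_add, TensorProduct.tmul_add, TensorProduct.add_tmul,
            LinearMap.add_apply, star_add, inner_add_right, smul_add, hΦ_addl, hΦ_addr, ha, hb]


end
end
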